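/- Let N = 4k with k ≥ 1 an integer, group the units into N/2 pairs {2j−1, 2j} for j = 1,…,N/2, and let p be the matched-pair design: p_w = 2^{−N/2} if exactly one unit in each pair is treated under w, and p_w = 0 otherwise (so π_i = 1/2 for all i and Σ_i w_i = N/2 on the support 𝒲). Let G*(w) be the full set of substitutes of each w ∈ 𝒲. Then for every W ∈ 𝒲 and every choice of potential outcomes, the contrast variance estimator computed with G = G* equals the standard matched-pair variance estimator: V̂_sub(W) = (4/(N(N−2)))·Σ_{j=1}^{N/2} (d_j − d̄)², where d_j = (2·W_{2j−1} − 1)·(y_{2j−1}(W) − y_{2j}(W)) is the treated-minus-control observed difference in pair j and d̄ = (2/N)·Σ_{j=1}^{N/2} d_j. -/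

import Mathlib

open Finset
open scoped Classical

noncomputable section

/-- Observed outcome of unit `i` under assignment `w`. -/
def yObs (N : ℕ) (Y1 Y0 : Fin N → ℝ) (w : Fin N → Bool) (i : Fin N) : ℝ :=
  if w i then Y1 i else Y0 i

/-- `l_i(w) = 1` if treated, `−1` if control. -/
def ell (N : ℕ) (w : Fin N → Bool) (i : Fin N) : ℝ :=
  if w i then 1 else -1

/-- The treated set `T(w)`. -/
def Tset (N : ℕ) (w : Fin N → Bool) : Finset (Fin N) :=
  univ.filter fun i => w i = true

/-- The contrast variance estimator. -/
def Vsub (N : ℕ) (p : (Fin N → Bool) → ℝ) (Y1 Y0 : Fin N → ℝ)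
    (G : (Fin N → Bool) → Finset (Fin N → Bool)) (W : Fin N → Bool) : ℝ :=
  (4 / (N : ℝ) ^ 2) * ∑ w : Fin N → Bool,
    if 0 < p w ∧ W ∈ G w then
      (p w / p W) * (1 / ((G w).card : ℝ)) * (∑ i, ell N w i * yObs N Y1 Y0 W i) ^ 2
    else 0

/-- An assignment on `4k` units is matched iff exactly one unit in each pair
`{2j, 2j+1}` (0-indexed) is treated. -/
def matchedMP (k : ℕ) (w : Fin (4 * k) → Bool) : Prop :=
  ∀ j : Fin (2 * k),
    w ⟨2 * j.1, by have := j.2; omega⟩ ≠ w ⟨2 * j.1 + 1, by have := j.2; omega⟩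

/-- The matched-pair design: each matched assignment has probability `2^{−N/2}`. -/
def pMP (k : ℕ) (w : Fin (4 * k) → Bool) : ℝ :=
  if matchedMP k w then ((1 : ℝ) / 2) ^ (2 * k) else 0

/-- The full set of substitutes of `w` under the matched-pair design:
all `w̃ ∈ 𝒲` with `|T(w̃) ∩ T(w)| = N/4` and `|T(w̃) ∩ T(w)ᶜ| = N/4`. -/
def GstarMP (k : ℕ) (w : Fin (4 * k) → Bool) : Finset (Fin (4 * k) → Bool) :=
  univ.filter fun w' =>
    0 < pMP k w' ∧ (Tset (4 * k) w' ∩ Tset (4 * k) w).card = k ∧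
      (Tset (4 * k) w' ∩ (Tset (4 * k) w)ᶜ).card = k

/-- Treated-minus-control observed difference in pair `j`:
`d_j = (2·W_{2j−1} − 1)·(y_{2j−1}(W) − y_{2j}(W))` (1-indexed). -/
def dPair (k : ℕ) (Y1 Y0 : Fin (4 * k) → ℝ) (W : Fin (4 * k) → Bool)
    (j : Fin (2 * k)) : ℝ :=
  (2 * (if W ⟨2 * j.1, by have := j.2; omega⟩ then (1 : ℝ) else 0) - 1) *
    (yObs (4 * k) Y1 Y0 W ⟨2 * j.1, by have := j.2; omega⟩ -
      yObs (4 * k) Y1 Y0 W ⟨2 * j.1 + 1, by have := j.2; omega⟩)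

/-!
For a matched `W`, a matched `w` is determined by the set `A` of pairs on which it agrees
with `W`, and it is a substitute of `W` exactly when `|A| = k`; substitution is symmetric and
every `G*(w)` has `C(2k, k)` elements. Writing `s_A(j) = ±1` according to `j ∈ A`, the contrast
`Σ_i l_i(w) y_i(W)` equals `Σ_j s_A(j) d_j`, so `V̂_sub(W)` is `4/N²` times the average of
`(Σ_j s_A(j) d_j)²` over the `k`-subsets `A` of the `2k` pairs.

Transpositions of pairs permute the `k`-subsets, so the covariance `Σ_A s_A(j) s_A(j')` is the
same for all `j ≠ j'`; since `Σ_j' s_A(j') = 0` it equals `-C(2k, k)/(2k - 1)`. The average of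
the quadratic form is therefore `2k/(2k - 1) · Σ_j (d_j - d̄)²`.
-/

section SplitSign

variable {ι : Type*}

def splitSign (A : Finset ι) (j : ι) : ℝ := if j ∈ A then 1 else -1

lemma splitSign_mul_self (A : Finset ι) (j : ι) : splitSign A j * splitSign A j = 1 := by
  unfold splitSign; split_ifs <;> norm_num

lemma sum_splitSign_mul_self [Fintype ι] (m : ℕ) (j : ι) :
    ∑ A ∈ powersetCard m univ, splitSign A j * splitSign A j =
      #(powersetCard m (univ : Finset ι)) := by
  simp [splitSign_mul_self]

lemma sum_splitSign [Fintype ι] (A : Finset ι) :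
    ∑ j, splitSign A j = 2 * #A - Fintype.card ι := by
  have h (j : ι) : splitSign A j = 2 * (if j ∈ A then 1 else 0) - 1 := by
    unfold splitSign; split_ifs <;> norm_num
  simp [h, sum_sub_distrib, mul_comm]

lemma splitSign_map_equiv (σ : Equiv.Perm ι) (A : Finset ι) (j : ι) :
    splitSign (A.map σ.toEmbedding) j = splitSign A (σ.symm j) := by
  simp [splitSign, Finset.mem_map_equiv]

lemma sum_powersetCard_map_perm [Fintype ι] {M : Type*} [AddCommMonoid M] (σ : Equiv.Perm ι)
    (m : ℕ) (g : Finset ι → M) :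
    ∑ A ∈ powersetCard m univ, g (A.map σ.toEmbedding) = ∑ A ∈ powersetCard m univ, g A := by
  conv_rhs => rw [← Finset.map_univ_equiv σ, powersetCard_map, sum_map]
  rfl

lemma sum_splitSign_mul_eq_of_ne [Fintype ι] (m : ℕ) {j j' j'' : ι} (h' : j' ≠ j)
    (h'' : j'' ≠ j) :
    ∑ A ∈ powersetCard m univ, splitSign A j * splitSign A j' =
      ∑ A ∈ powersetCard m univ, splitSign A j * splitSign A j'' := by
  rw [← sum_powersetCard_map_perm (Equiv.swap j' j'')]
  simp only [splitSign_map_equiv, Equiv.symm_swap, Equiv.swap_apply_left,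
    Equiv.swap_apply_of_ne_of_ne h'.symm h''.symm]

lemma card_sub_one_mul_sum_splitSign_mul [Fintype ι] {m : ℕ} (hm : 2 * m = Fintype.card ι)
    {j j' : ι} (h : j' ≠ j) :
    (Fintype.card ι - 1 : ℝ) * ∑ A ∈ powersetCard m univ, splitSign A j * splitSign A j' =
      -#(powersetCard m (univ : Finset ι)) := by
  set P := powersetCard m (univ : Finset ι)
  set c := fun j'' : ι => ∑ A ∈ P, splitSign A j * splitSign A j''
  have hzero : ∑ j'', c j'' = 0 := by
    simp only [c]
    rw [sum_comm]
    refine sum_eq_zero fun A hA => ?_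
    rw [← mul_sum, sum_splitSign, (mem_powersetCard.1 hA).2, ← hm]
    push_cast; ring
  have hoff : ∑ j'' ∈ univ.erase j, c j'' = (Fintype.card ι - 1 : ℝ) * c j' := by
    rw [sum_congr rfl fun j'' hj'' => sum_splitSign_mul_eq_of_ne m (ne_of_mem_erase hj'') h,
      sum_const, card_erase_of_mem (mem_univ j), card_univ, nsmul_eq_mul,
      Nat.cast_pred (Fintype.card_pos_iff.2 ⟨j⟩)]
  rw [← add_sum_erase _ _ (mem_univ j), hoff] at hzero
  linarith [sum_splitSign_mul_self m j]

lemma sum_mul_card_sub_one_mul_sum_splitSign_mul [Fintype ι] {m : ℕ}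
    (hm : 2 * m = Fintype.card ι) (e : ι → ℝ) (j : ι) :
    ∑ j', e j' * ((Fintype.card ι - 1 : ℝ) *
        ∑ A ∈ powersetCard m univ, splitSign A j * splitSign A j') =
      #(powersetCard m (univ : Finset ι)) * (Fintype.card ι * e j - ∑ j', e j') := by
  rw [← add_sum_erase _ _ (mem_univ j), sum_splitSign_mul_self,
    sum_congr rfl fun j' hj' =>
      congrArg (e j' * ·) (card_sub_one_mul_sum_splitSign_mul hm (ne_of_mem_erase hj')),
    ← sum_mul, sum_erase_eq_sub (mem_univ j)]
  ring

lemma card_sub_one_mul_sum_sq_sum_splitSign_mul_of_sum_eq_zero [Fintype ι] {m : ℕ}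
    (hm : 2 * m = Fintype.card ι) {e : ι → ℝ} (he : ∑ j, e j = 0) :
    (Fintype.card ι - 1 : ℝ) * ∑ A ∈ powersetCard m univ, (∑ j, splitSign A j * e j) ^ 2 =
      Fintype.card ι * #(powersetCard m (univ : Finset ι)) * ∑ j, e j ^ 2 := by
  calc (Fintype.card ι - 1 : ℝ) * ∑ A ∈ powersetCard m univ, (∑ j, splitSign A j * e j) ^ 2
      = ∑ j, e j * ∑ j', e j' * ((Fintype.card ι - 1 : ℝ) *
          ∑ A ∈ powersetCard m univ, splitSign A j * splitSign A j') := by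
        have hsq (A : Finset ι) : (∑ j, splitSign A j * e j) ^ 2 =
            ∑ j, ∑ j', e j * (e j' * (splitSign A j * splitSign A j')) := by
          rw [sq, sum_mul_sum]
          exact sum_congr rfl fun j _ => sum_congr rfl fun j' _ => by ring
        simp only [hsq, mul_sum]
        rw [sum_comm]
        refine sum_congr rfl fun j _ => ?_
        rw [sum_comm]
        exact sum_congr rfl fun j' _ => sum_congr rfl fun A _ => by ring
    _ = Fintype.card ι * #(powersetCard m (univ : Finset ι)) * ∑ j, e j ^ 2 := by
        rw [mul_sum]
        refine sum_congr rfl fun j _ => ?_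
        rw [sum_mul_card_sub_one_mul_sum_splitSign_mul hm e, he]
        ring

lemma sum_sub_sum_div_card [Fintype ι] (d : ι → ℝ) :
    ∑ j, (d j - (∑ j', d j') / Fintype.card ι) = 0 := by
  rcases isEmpty_or_nonempty ι with hι | hι
  · simp
  · rw [sum_sub_distrib, sum_const, card_univ, nsmul_eq_mul,
      mul_div_cancel₀ _ (by exact_mod_cast Fintype.card_ne_zero), sub_self]

lemma sum_splitSign_mul_sub [Fintype ι] {A : Finset ι} (hA : 2 * #A = Fintype.card ι)
    (d : ι → ℝ) (c : ℝ) : ∑ j, splitSign A j * (d j - c) = ∑ j, splitSign A j * d j := by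
  simp only [mul_sub, sum_sub_distrib, ← sum_mul, sum_splitSign]
  rw [← hA]; push_cast; ring

theorem card_sub_one_mul_sum_sq_sum_splitSign_mul [Fintype ι] {m : ℕ}
    (hm : 2 * m = Fintype.card ι) (d : ι → ℝ) :
    (Fintype.card ι - 1 : ℝ) * ∑ A ∈ powersetCard m univ, (∑ j, splitSign A j * d j) ^ 2 =
      Fintype.card ι * #(powersetCard m (univ : Finset ι)) *
        ∑ j, (d j - (∑ j', d j') / Fintype.card ι) ^ 2 := by
  rw [← card_sub_one_mul_sum_sq_sum_splitSign_mul_of_sum_eq_zero hm (sum_sub_sum_div_card d)]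
  congr 1
  refine sum_congr rfl fun A hA => ?_
  rw [sum_splitSign_mul_sub (by rw [(mem_powersetCard.1 hA).2, hm])]

end SplitSign

section MatchedPairs

variable {k : ℕ}

def pairFst (k : ℕ) (j : Fin (2 * k)) : Fin (4 * k) := ⟨2 * j, by omega⟩

def pairSnd (k : ℕ) (j : Fin (2 * k)) : Fin (4 * k) := ⟨2 * j + 1, by omega⟩

def pairOf (k : ℕ) (i : Fin (4 * k)) : Fin (2 * k) := ⟨i / 2, by omega⟩

@[simp] lemma pairOf_pairFst (j : Fin (2 * k)) : pairOf k (pairFst k j) = j := by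
  ext; simp [pairOf, pairFst]

@[simp] lemma pairOf_pairSnd (j : Fin (2 * k)) : pairOf k (pairSnd k j) = j := by
  ext; simp [pairOf, pairSnd]; omega

lemma eq_pairFst_or_eq_pairSnd (i : Fin (4 * k)) :
    i = pairFst k (pairOf k i) ∨ i = pairSnd k (pairOf k i) := by
  rcases Nat.even_or_odd' i.1 with ⟨j, hj | hj⟩
  · left; ext; simp [pairFst, pairOf]; omega
  · right; ext; simp [pairSnd, pairOf]; omega

lemma sum_eq_sum_pairs {M : Type*} [AddCommMonoid M] (f : Fin (4 * k) → M) :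
    ∑ i, f i = ∑ j, (f (pairFst k j) + f (pairSnd k j)) := by
  rw [← (finProdFinEquiv.trans (finCongr (by ring : 2 * k * 2 = 4 * k))).sum_comp,
    Fintype.sum_prod_type]
  refine sum_congr rfl fun j _ => ?_
  rw [Fin.sum_univ_two]
  congr 2 <;> ext <;> simp [pairFst, pairSnd, add_comm, mul_comm]

lemma card_eq_card_of_pairs {S : Finset (Fin (4 * k))} {T : Finset (Fin (2 * k))}
    (h : ∀ j, (if pairFst k j ∈ S then 1 else 0) + (if pairSnd k j ∈ S then 1 else 0) =
      if j ∈ T then 1 else 0) :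
    #S = #T := by
  have hcard {n : ℕ} (U : Finset (Fin n)) : #U = ∑ i, if i ∈ U then 1 else 0 := by simp
  rw [hcard S, hcard T, sum_eq_sum_pairs]
  exact sum_congr rfl fun j _ => h j

lemma matchedMP.pairSnd_eq {w : Fin (4 * k) → Bool} (hw : matchedMP k w) (j : Fin (2 * k)) :
    w (pairSnd k j) = !w (pairFst k j) :=
  Bool.eq_not_iff.2 (hw j).symm

lemma matchedMP.ext {w w' : Fin (4 * k) → Bool} (hw : matchedMP k w) (hw' : matchedMP k w')
    (h : ∀ j, w (pairFst k j) = w' (pairFst k j)) : w = w' := by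
  funext i
  rcases eq_pairFst_or_eq_pairSnd i with hi | hi <;> rw [hi]
  · exact h _
  · rw [hw.pairSnd_eq, hw'.pairSnd_eq, h]

lemma pMP_pos_iff {w : Fin (4 * k) → Bool} : 0 < pMP k w ↔ matchedMP k w := by
  by_cases h : matchedMP k w <;> simp [pMP, h]

def agreeSet (k : ℕ) (b w : Fin (4 * k) → Bool) : Finset (Fin (2 * k)) :=
  {j | w (pairFst k j) = b (pairFst k j)}

lemma mem_agreeSet {b w : Fin (4 * k) → Bool} {j : Fin (2 * k)} :
    j ∈ agreeSet k b w ↔ w (pairFst k j) = b (pairFst k j) := by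
  simp [agreeSet]

lemma agreeSet_comm (b w : Fin (4 * k) → Bool) : agreeSet k b w = agreeSet k w b := by
  ext; simp [mem_agreeSet, eq_comm]

def flipOutside (k : ℕ) (b : Fin (4 * k) → Bool) (A : Finset (Fin (2 * k))) :
    Fin (4 * k) → Bool :=
  fun i => if pairOf k i ∈ A then b i else !b i

lemma matchedMP_flipOutside {b : Fin (4 * k) → Bool} (hb : matchedMP k b)
    (A : Finset (Fin (2 * k))) : matchedMP k (flipOutside k b A) := by
  intro j
  change flipOutside k b A (pairFst k j) ≠ flipOutside k b A (pairSnd k j)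
  by_cases hj : j ∈ A <;> simp [flipOutside, hj, hb.pairSnd_eq]

lemma agreeSet_flipOutside (b : Fin (4 * k) → Bool) (A : Finset (Fin (2 * k))) :
    agreeSet k b (flipOutside k b A) = A := by
  ext j
  by_cases hj : j ∈ A <;> simp [mem_agreeSet, flipOutside, hj]

lemma flipOutside_agreeSet {b w : Fin (4 * k) → Bool} (hb : matchedMP k b)
    (hw : matchedMP k w) : flipOutside k b (agreeSet k b w) = w := by
  refine (matchedMP_flipOutside hb _).ext hw fun j => ?_
  by_cases hj : j ∈ agreeSet k b w
  · simp [flipOutside, hj, (mem_agreeSet.1 hj).symm]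
  · have hne : w (pairFst k j) ≠ b (pairFst k j) := mt mem_agreeSet.2 hj
    simp [flipOutside, hj, Bool.eq_not_iff.2 hne]

lemma card_Tset_inter {b w : Fin (4 * k) → Bool} (hb : matchedMP k b) (hw : matchedMP k w) :
    #(Tset (4 * k) w ∩ Tset (4 * k) b) = #(agreeSet k b w) :=
  card_eq_card_of_pairs fun j => by
    cases hwj : w (pairFst k j) <;> cases hbj : b (pairFst k j) <;>
      simp [Tset, mem_agreeSet, hw.pairSnd_eq, hb.pairSnd_eq, hwj, hbj]

lemma card_Tset_inter_compl {b w : Fin (4 * k) → Bool} (hb : matchedMP k b)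
    (hw : matchedMP k w) : #(Tset (4 * k) w ∩ (Tset (4 * k) b)ᶜ) = #(agreeSet k b w)ᶜ :=
  card_eq_card_of_pairs fun j => by
    cases hwj : w (pairFst k j) <;> cases hbj : b (pairFst k j) <;>
      simp [Tset, mem_agreeSet, hw.pairSnd_eq, hb.pairSnd_eq, hwj, hbj]

lemma mem_GstarMP_iff {b w : Fin (4 * k) → Bool} (hb : matchedMP k b) :
    w ∈ GstarMP k b ↔ matchedMP k w ∧ #(agreeSet k b w) = k := by
  simp only [GstarMP, mem_filter, mem_univ, true_and, pMP_pos_iff]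
  constructor
  · rintro ⟨hw, h, -⟩
    exact ⟨hw, card_Tset_inter hb hw ▸ h⟩
  · rintro ⟨hw, h⟩
    refine ⟨hw, by rw [card_Tset_inter hb hw, h], ?_⟩
    rw [card_Tset_inter_compl hb hw, card_compl, Fintype.card_fin, h]
    omega

lemma pMP_pos_and_mem_GstarMP_iff {W w : Fin (4 * k) → Bool} (hW : matchedMP k W) :
    0 < pMP k w ∧ W ∈ GstarMP k w ↔ w ∈ GstarMP k W := by
  rw [mem_GstarMP_iff hW, pMP_pos_iff, agreeSet_comm]
  exact ⟨fun ⟨hw, hmem⟩ => ⟨hw, ((mem_GstarMP_iff hw).1 hmem).2⟩,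
    fun ⟨hw, h⟩ => ⟨hw, (mem_GstarMP_iff hw).2 ⟨hW, h⟩⟩⟩

lemma sum_GstarMP_eq_sum_powersetCard {M : Type*} [AddCommMonoid M] {b : Fin (4 * k) → Bool}
    (hb : matchedMP k b) (f : Finset (Fin (2 * k)) → M) :
    ∑ w ∈ GstarMP k b, f (agreeSet k b w) = ∑ A ∈ powersetCard k univ, f A :=
  sum_nbij' (agreeSet k b) (flipOutside k b)
    (fun w hw => mem_powersetCard.2 ⟨subset_univ _, ((mem_GstarMP_iff hb).1 hw).2⟩)
    (fun A hA => (mem_GstarMP_iff hb).2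
      ⟨matchedMP_flipOutside hb A, by rw [agreeSet_flipOutside, (mem_powersetCard.1 hA).2]⟩)
    (fun w hw => flipOutside_agreeSet hb ((mem_GstarMP_iff hb).1 hw).1)
    (fun A _ => agreeSet_flipOutside b A) fun _ _ => rfl

lemma card_GstarMP {b : Fin (4 * k) → Bool} (hb : matchedMP k b) :
    #(GstarMP k b) = #(powersetCard k (univ : Finset (Fin (2 * k)))) := by
  simpa only [card_eq_sum_ones] using sum_GstarMP_eq_sum_powersetCard hb fun _ => 1

lemma sum_ell_mul_yObs {W w : Fin (4 * k) → Bool} (hw : matchedMP k w)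
    (Y1 Y0 : Fin (4 * k) → ℝ) :
    ∑ i, ell (4 * k) w i * yObs (4 * k) Y1 Y0 W i =
      ∑ j, splitSign (agreeSet k W w) j * dPair k Y1 Y0 W j := by
  rw [sum_eq_sum_pairs]
  refine sum_congr rfl fun j _ => ?_
  change _ = _ * ((2 * (if W (pairFst k j) then 1 else 0) - 1) *
    (yObs (4 * k) Y1 Y0 W (pairFst k j) - yObs (4 * k) Y1 Y0 W (pairSnd k j)))
  cases hWj : W (pairFst k j) <;> cases hwj : w (pairFst k j) <;>
    simp [ell, splitSign, mem_agreeSet, hw.pairSnd_eq, hWj, hwj] <;> ring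

lemma Vsub_GstarMP {W : Fin (4 * k) → Bool} (hW : matchedMP k W) (Y1 Y0 : Fin (4 * k) → ℝ) :
    Vsub (4 * k) (pMP k) Y1 Y0 (GstarMP k) W =
      4 / ((4 * k : ℕ) : ℝ) ^ 2 * ∑ A ∈ powersetCard k univ,
        1 / (#(powersetCard k (univ : Finset (Fin (2 * k)))) : ℝ) *
          (∑ j, splitSign A j * dPair k Y1 Y0 W j) ^ 2 := by
  have hsupp : ({w | 0 < pMP k w ∧ W ∈ GstarMP k w} : Finset _) = GstarMP k W := by
    ext w; simp [pMP_pos_and_mem_GstarMP_iff hW]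
  rw [Vsub, ← sum_filter, hsupp, ← sum_GstarMP_eq_sum_powersetCard hW]
  refine congrArg _ (sum_congr rfl fun w hw => ?_)
  have hwm := ((mem_GstarMP_iff hW).1 hw).1
  rw [pMP, pMP, if_pos hwm, if_pos hW, div_self (by positivity), one_mul, card_GstarMP hwm,
    sum_ell_mul_yObs hwm]

end MatchedPairs

/-- Theorem 3: under the matched-pair design on `N = 4k` units, the contrast variance
estimator with the full set of substitutes equals the standard matched-pair variance
estimator `V̂_pair(W) = (4/(N(N−2)))·Σ_j (d_j − d̄)²`. -/
theorem contrast_equals_pair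
    (k : ℕ) (hk : 1 ≤ k) (Y1 Y0 : Fin (4 * k) → ℝ)
    (W : Fin (4 * k) → Bool) (hW : 0 < pMP k W) :
    Vsub (4 * k) (pMP k) Y1 Y0 (GstarMP k) W =
      (4 / (((4 * k : ℕ) : ℝ) * (((4 * k : ℕ) : ℝ) - 2))) *
        ∑ j : Fin (2 * k),
          (dPair k Y1 Y0 W j -
            (2 / ((4 * k : ℕ) : ℝ)) * ∑ j' : Fin (2 * k), dPair k Y1 Y0 W j') ^ 2 := by
  rw [Vsub_GstarMP (pMP_pos_iff.1 hW), ← mul_sum]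
  set d := dPair k Y1 Y0 W
  set P := powersetCard k (univ : Finset (Fin (2 * k)))
  have hquad : (2 * k - 1 : ℝ) * ∑ A ∈ P, (∑ j, splitSign A j * d j) ^ 2 =
      2 * k * #P * ∑ j, (d j - (∑ j', d j') / (2 * k)) ^ 2 := by
    simpa only [Fintype.card_fin, Nat.cast_mul, Nat.cast_ofNat] using
      card_sub_one_mul_sum_sq_sum_splitSign_mul (m := k) (by simp) d
  have hmean : 2 / (4 * (k : ℝ)) * ∑ j, d j = (∑ j, d j) / (2 * k) := by
    field_simp; ring
  push_cast
  rw [hmean]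
  generalize (∑ A ∈ P, (∑ j, splitSign A j * d j) ^ 2) = S at hquad ⊢
  generalize (∑ j, (d j - (∑ j', d j') / (2 * k)) ^ 2) = T at hquad ⊢
  have hP : (#P : ℝ) ≠ 0 := by simp [P, (Nat.choose_pos (by omega : k ≤ 2 * k)).ne']
  have hk' : (1 : ℝ) ≤ k := by exact_mod_cast hk
  have h2k : (2 * k - 1 : ℝ) ≠ 0 := by linarith
  have h4k : (4 * k - 2 : ℝ) ≠ 0 := by linarith
  field_simp
  linear_combination 2 * hquad
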